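/- The function F̂ defined on {(t₁,t₂,t₃) ∈ ℝ³ : t₂ > 0} by F̂(t₁,t₂,t₃) = (1/2)t₁t₃² + (1/2)t₂²t₃ + (1/2)t₁²·log t₂ satisfies the WDVV associativity equations: with η_{αβ} = ∂³F̂/∂t₃∂t_α∂t_β (the constant matrix with η₁₃ = η₃₁ = 1, η₂₂ = 1, other entries 0) and inverse η^{αβ}, one has Σ_{μ,ν} (∂³F̂/∂t_α∂t_β∂t_μ)·η^{μν}·(∂³F̂/∂t_ν∂t_γ∂t_δ) = Σ_{μ,ν} (∂³F̂/∂t_δ∂t_β∂t_μ)·η^{μν}·(∂³F̂/∂t_ν∂t_γ∂t_α) for all indices α,β,γ,δ ∈ {1,2,3} and all points with t₂ > 0. -/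

import Mathlib

open Real

/-- Partial derivative of a function of `n` real variables in the `i`-th coordinate
direction. -/
noncomputable def pd {n : ℕ} (i : Fin n) (f : (Fin n → ℝ) → ℝ) : (Fin n → ℝ) → ℝ :=
  fun t => fderiv ℝ f t (Pi.single i 1)

/-- The Legendre transform `S₃` of the `W̃⁽¹⁾(A₂)` prepotential:
`F̂ = ½t₁t₃² + ½t₂²t₃ + ½t₁² log t₂`, defined for `t₂ > 0`. -/
noncomputable def Fhat3 : (Fin 3 → ℝ) → ℝ :=
  fun t => (1/2) * t 0 * (t 2)^2 + (1/2) * (t 1)^2 * t 2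
    + (1/2) * (t 0)^2 * Real.log (t 1)

/-!
On the open set `{t₂ ≠ 0}` each partial derivative of `F̂` agrees with an explicit formula, so the
iterated partials can be computed one layer at a time. The third derivatives are polynomials in
`t₁` and `1/t₂`, and their `t₃`-slice is the antidiagonal matrix `η`, which is its own inverse.
Contracting with `η` pairs the first index with the third and the second with itself, so the
WDVV equations become finitely many polynomial identities in `t₁` and `1/t₂`.
-/

theorem isOpen_setOf_apply_ne_zero {ι : Type*} (i : ι) : IsOpen {t : ι → ℝ | t i ≠ 0} :=
  isOpen_ne_fun (continuous_apply i) continuous_const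

section PartialDerivative

variable {n : ℕ} {f g : (Fin n → ℝ) → ℝ} {t : Fin n → ℝ} (i : Fin n)

theorem pd_congr_of_eqOn {U : Set (Fin n → ℝ)} (hU : IsOpen U) (hfg : Set.EqOn f g U)
    (ht : t ∈ U) : pd i f t = pd i g t := by
  rw [pd, pd, (hfg.eventuallyEq_of_mem (hU.mem_nhds ht)).fderiv_eq]

theorem pd_const (c : ℝ) : pd i (fun _ => c) t = 0 := by
  simp [pd]

theorem pd_apply (j : Fin n) : pd i (fun s => s j) t = (Pi.single i 1 : Fin n → ℝ) j := by
  simp [pd, (hasFDerivAt_apply j t).fderiv]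

theorem pd_fun_add (hf : DifferentiableAt ℝ f t) (hg : DifferentiableAt ℝ g t) :
    pd i (fun s => f s + g s) t = pd i f t + pd i g t := by
  simp [pd, fderiv_fun_add hf hg]

theorem pd_fun_sub (hf : DifferentiableAt ℝ f t) (hg : DifferentiableAt ℝ g t) :
    pd i (fun s => f s - g s) t = pd i f t - pd i g t := by
  simp [pd, fderiv_fun_sub hf hg]

theorem pd_fun_mul (hf : DifferentiableAt ℝ f t) (hg : DifferentiableAt ℝ g t) :
    pd i (fun s => f s * g s) t = f t * pd i g t + pd i f t * g t := by
  simp [pd, fderiv_fun_mul hf hg, mul_comm]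

theorem pd_comp {φ : ℝ → ℝ} {φ' : ℝ} (hφ : HasDerivAt φ φ' (f t))
    (hf : DifferentiableAt ℝ f t) : pd i (fun s => φ (f s)) t = φ' * pd i f t := by
  change fderiv ℝ (φ ∘ f) t _ = _
  rw [(hφ.comp_hasFDerivAt t hf.hasFDerivAt).fderiv]
  simp [pd]

theorem pd_fun_pow (m : ℕ) (hf : DifferentiableAt ℝ f t) :
    pd i (fun s => f s ^ m) t = m * f t ^ (m - 1) * pd i f t :=
  pd_comp i (hasDerivAt_pow m _) hf

theorem pd_fun_inv (hf : DifferentiableAt ℝ f t) (h : f t ≠ 0) :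
    pd i (fun s => (f s)⁻¹) t = -(f t ^ 2)⁻¹ * pd i f t :=
  pd_comp i (hasDerivAt_inv h) hf

theorem pd_fun_log (hf : DifferentiableAt ℝ f t) (h : f t ≠ 0) :
    pd i (fun s => log (f s)) t = (f t)⁻¹ * pd i f t :=
  pd_comp i (hasDerivAt_log h) hf

end PartialDerivative

local notation "η" => (!![0, 0, 1; 0, 1, 0; 1, 0, 0] : Matrix (Fin 3) (Fin 3) ℝ)

noncomputable def gradFhat3 (t : Fin 3 → ℝ) : Fin 3 → ℝ :=
  ![(1/2) * t 2 ^ 2 + t 0 * log (t 1),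
    t 1 * t 2 + (1/2) * t 0 ^ 2 * (t 1)⁻¹,
    t 0 * t 2 + (1/2) * t 1 ^ 2]

noncomputable def hessFhat3 (t : Fin 3 → ℝ) : Matrix (Fin 3) (Fin 3) ℝ :=
  !![log (t 1), t 0 * (t 1)⁻¹, t 2;
    t 0 * (t 1)⁻¹, t 2 - (1/2) * t 0 ^ 2 * (t 1)⁻¹ ^ 2, t 1;
    t 2, t 1, t 0]

/-- The third derivatives of `F̂`, in terms of `x = t₁` and `u = 1/t₂`. -/
def thirdFhat3 (x u : ℝ) : Fin 3 → Matrix (Fin 3) (Fin 3) ℝ :=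
  ![!![0, u, 0; u, -x * u ^ 2, 0; 0, 0, 1],
    !![u, -x * u ^ 2, 0; -x * u ^ 2, x ^ 2 * u ^ 3, 1; 0, 1, 0],
    η]

section Derivatives

variable {t : Fin 3 → ℝ}

theorem pd_Fhat3 (ht : t 1 ≠ 0) (i : Fin 3) : pd i Fhat3 t = gradFhat3 t i := by
  unfold Fhat3
  fin_cases i <;>
    simp (disch := first | assumption | fun_prop (disch := assumption)) only
      [gradFhat3, pd_fun_add, pd_fun_mul, pd_fun_pow, pd_fun_log, pd_const, pd_apply,
        Pi.single_apply, Fin.reduceFinMk, Fin.reduceEq, ↓reduceIte, Matrix.cons_val] <;>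
    ring

theorem pd_gradFhat3 (ht : t 1 ≠ 0) (i j : Fin 3) :
    pd i (fun s => gradFhat3 s j) t = hessFhat3 t i j := by
  fin_cases i <;> fin_cases j <;>
    simp (disch := first | assumption | fun_prop (disch := assumption)) only
      [gradFhat3, hessFhat3, pd_fun_add, pd_fun_mul, pd_fun_pow, pd_fun_log, pd_fun_inv,
        pd_const, pd_apply, Pi.single_apply, Fin.reduceFinMk, Fin.reduceEq, ↓reduceIte,
        Matrix.of_apply, Matrix.cons_val] <;>
    ring

theorem pd_hessFhat3 (ht : t 1 ≠ 0) (i j k : Fin 3) :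
    pd i (fun s => hessFhat3 s j k) t = thirdFhat3 (t 0) (t 1)⁻¹ i j k := by
  fin_cases i <;> fin_cases j <;> fin_cases k <;>
    simp (disch := first | assumption | fun_prop (disch := assumption)) only
      [thirdFhat3, hessFhat3, pd_fun_mul, pd_fun_pow, pd_fun_log, pd_fun_inv, pd_fun_sub,
        pd_const, pd_apply, Pi.single_apply, Fin.reduceFinMk, Fin.reduceEq, ↓reduceIte,
        Matrix.of_apply, Matrix.cons_val] <;>
    ring

theorem pd_pd_Fhat3 (ht : t 1 ≠ 0) (i j : Fin 3) : pd i (pd j Fhat3) t = hessFhat3 t i j := by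
  rw [pd_congr_of_eqOn i (isOpen_setOf_apply_ne_zero 1) (fun s hs => pd_Fhat3 hs j) ht]
  exact pd_gradFhat3 ht i j

theorem pd_pd_pd_Fhat3 (ht : t 1 ≠ 0) (i j k : Fin 3) :
    pd i (pd j (pd k Fhat3)) t = thirdFhat3 (t 0) (t 1)⁻¹ i j k := by
  rw [pd_congr_of_eqOn i (isOpen_setOf_apply_ne_zero 1) (fun s hs => pd_pd_Fhat3 hs j k) ht]
  exact pd_hessFhat3 ht i j k

end Derivatives

theorem sum_sum_mul_η_mul (a b : Fin 3 → ℝ) :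
    ∑ μ, ∑ ν, a μ * η μ ν * b ν = a 0 * b 2 + a 1 * b 1 + a 2 * b 0 := by
  simp [Fin.sum_univ_three]

theorem thirdFhat3_wdvv (x u : ℝ) (α β γ δ : Fin 3) :
    ∑ μ, ∑ ν, thirdFhat3 x u α β μ * η μ ν * thirdFhat3 x u ν γ δ
      = ∑ μ, ∑ ν, thirdFhat3 x u δ β μ * η μ ν * thirdFhat3 x u ν γ α := by
  simp only [sum_sum_mul_η_mul]
  fin_cases α <;> fin_cases β <;> fin_cases γ <;> fin_cases δ <;>
    simp only [thirdFhat3, Fin.reduceFinMk, Matrix.of_apply, Matrix.cons_val] <;>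
    ring

/-- The prepotential `F̂ = ½t₁t₃² + ½t₂²t₃ + ½t₁² log t₂` satisfies the WDVV
associativity equations on `{t₂ > 0}`: `η_{αβ} = ∂³F̂/∂t₃∂t_α∂t_β` is the constant
matrix with `η₁₃ = η₃₁ = η₂₂ = 1` (other entries `0`), which is its own inverse
`η^{αβ}`, and `Σ_{μν} F̂_{αβμ} η^{μν} F̂_{νγδ} = Σ_{μν} F̂_{δβμ} η^{μν} F̂_{νγα}`. -/
theorem WDVV_S3_tildeW1_A2 :
    (∀ t : Fin 3 → ℝ, 0 < t 1 → ∀ α β : Fin 3,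
      pd 2 (pd α (pd β Fhat3)) t
        = (!![0, 0, 1; 0, 1, 0; 1, 0, 0] : Matrix (Fin 3) (Fin 3) ℝ) α β) ∧
    (∀ t : Fin 3 → ℝ, 0 < t 1 → ∀ α β γ δ : Fin 3,
      (∑ μ, ∑ ν, pd α (pd β (pd μ Fhat3)) t
          * (!![0, 0, 1; 0, 1, 0; 1, 0, 0] : Matrix (Fin 3) (Fin 3) ℝ) μ ν
          * pd ν (pd γ (pd δ Fhat3)) t)
        = ∑ μ, ∑ ν, pd δ (pd β (pd μ Fhat3)) t
          * (!![0, 0, 1; 0, 1, 0; 1, 0, 0] : Matrix (Fin 3) (Fin 3) ℝ) μ ν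
          * pd ν (pd γ (pd α Fhat3)) t) := by
  refine ⟨fun t ht α β => ?_, fun t ht α β γ δ => ?_⟩
  · rw [pd_pd_pd_Fhat3 ht.ne']
    rfl
  · simp only [pd_pd_pd_Fhat3 ht.ne']
    exact thirdFhat3_wdvv _ _ α β γ δ
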